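/- arXiv:2412.19905 — 12 statements merged into one kernel-verified Lean document; each statement's English description precedes it below -/
import Mathlib

section
/- The prime-order element graph Γ(G) of a finite group G has a universal vertex (a vertex adjacent to all other vertices) if and only if every nonidentity element of G has prime order. -/
/-- The prime-order element graph of a group: `x ~ y` iff `x ≠ y` and `orderOf (x*y)` is prime. -/
def pog (G : Type*) [Group G] : SimpleGraph G where
  Adj x y := x ≠ y ∧ (orderOf (x * y)).Prime
  symm := by
    constructor
    intro x y ⟨h1, h2⟩
    exact ⟨h1.symm, by
      have : SemiconjBy x (y * x) (x * y) := by simp [SemiconjBy, mul_assoc]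
      rwa [this.orderOf_eq]⟩
  loopless := by constructor; intro x ⟨h1, _⟩; exact h1 rfl

/-- Additive version of the prime-order element graph. -/
def pogAdd (G : Type*) [AddCommGroup G] : SimpleGraph G where
  Adj x y := x ≠ y ∧ (addOrderOf (x + y)).Prime
  symm := by constructor; intro x y ⟨h1, h2⟩; exact ⟨h1.symm, by rwa [add_comm]⟩
  loopless := by constructor; intro x ⟨h1, _⟩; exact h1 rfl

theorem stmt_2 (G : Type*) [Group G] [Fintype G] :
    (∃ v : G, ∀ w : G, w ≠ v → (pog G).Adj v w) ↔
      ∀ g : G, g ≠ 1 → (orderOf g).Prime := by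
  constructor
  · rintro ⟨v, hv⟩ g hg
    have hvinv : v⁻¹ = v := by
      by_contra h
      have := (hv v⁻¹ h).2
      simp [orderOf_one] at this
      exact Nat.not_prime_one this
    have hw : v⁻¹ * g ≠ v := by
      intro h
      apply hg
      have : g = v * v := by
        calc g = v * (v⁻¹ * g) := by rw [mul_inv_cancel_left]
        _ = v * v := by rw [h]
      rw [this]
      nth_rewrite 1 [← hvinv]
      rw [inv_mul_cancel]
    have := (hv _ hw).2
    rwa [show v * (v⁻¹ * g) = g by group] at this
  · intro h
    refine ⟨1, fun w hw => ⟨hw.symm, ?_⟩⟩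
    rw [one_mul]
    exact h w hw
end

section
/- The prime-order element graph of the symmetric group S₄ contains an induced 5-cycle, namely on the vertices e, (1 2 3), (1 3 4 2), (1 4 2 3), (1 3 2); consecutive vertices (cyclically) have products of prime order, and non-consecutive products have non-prime order. -/
/-- An induced 5-cycle: the five vertices are distinct, and two of them are
adjacent exactly when they are cyclically consecutive. -/
def IsInducedCycle5 {V : Type*} (Γ : SimpleGraph V) (v : Fin 5 → V) : Prop :=
  Function.Injective v ∧
    ∀ i j : Fin 5, i ≠ j → (Γ.Adj (v i) (v j) ↔ j = i + 1 ∨ i = j + 1)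

lemma ord_prime {G : Type*} [Group G] (g : G) (p : ℕ) (hp : p.Prime)
    (h : g ^ p = 1) (h1 : g ≠ 1) : (orderOf g).Prime := by
  haveI : Fact p.Prime := ⟨hp⟩
  rwa [orderOf_eq_prime h h1]

lemma ord_four {G : Type*} [Group G] (g : G) (h4 : g ^ 4 = 1) (h2 : g ^ 2 ≠ 1) :
    ¬ (orderOf g).Prime := by
  intro hp
  have hd : orderOf g ∣ 4 := orderOf_dvd_of_pow_eq_one h4
  have h2' : orderOf g ∣ 2 := by
    have : orderOf g ∣ 2 ^ 2 := by norm_num at hd ⊢; exact hd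
    exact (Nat.Prime.dvd_of_dvd_pow hp this)
  have : orderOf g = 2 := (Nat.prime_dvd_prime_iff_eq hp Nat.prime_two).mp h2'
  exact h2 (this ▸ pow_orderOf_eq_one g)

lemma ord_one {G : Type*} [Group G] (g : G) (h : g = 1) : ¬ (orderOf g).Prime := by
  subst h; simp [Nat.not_prime_one]

theorem stmt_5 :
    IsInducedCycle5 (pog (Equiv.Perm (Fin 4)))
      ![1, c[0, 1, 2], c[0, 2, 3, 1], c[0, 3, 1, 2], c[0, 2, 1]] := by
  constructor
  · intro i j h
    fin_cases i <;> fin_cases j <;> first | rfl | (exfalso; revert h; decide)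
  · intro i j hij
    fin_cases i <;> fin_cases j <;> simp_all <;>
      first
        | exact ⟨by decide, ord_prime _ 2 Nat.prime_two (by decide) (by decide)⟩
        | exact ⟨by decide, ord_prime _ 3 Nat.prime_three (by decide) (by decide)⟩
        | (rintro ⟨-, hp⟩;
           first
             | exact ord_four _ (by decide) (by decide) hp
             | exact ord_one _ (by decide) hp)
end

section
/- Let p be a prime and G a finite p-group such that the product of any two elements of order p has order p or 1 (equivalently, the subgroup generated by the set S of elements of order p equals S ∪ {e}). Then the prime-order element graph Γ(G) contains no induced cycle of odd length at least 5. -/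
theorem stmt_6 (p : ℕ) (hp : p.Prime) (G : Type*) [Group G] [Fintype G]
    (hG : IsPGroup p G)
    (hS : ∀ a b : G, orderOf a = p → orderOf b = p → orderOf (a * b) = p ∨ a * b = 1)
    (n : ℕ) (hn : 2 ≤ n) (v : ZMod (2 * n + 1) → G) :
    ¬(Function.Injective v ∧
      ∀ i j : ZMod (2 * n + 1), i ≠ j →
        ((pog G).Adj (v i) (v j) ↔ j = i + 1 ∨ i = j + 1)) := by
  rintro ⟨hinj, hadj⟩
  haveI : Fact (1 < 2 * n + 1) := ⟨by omega⟩
  -- closure of {g | g^p = 1} under multiplication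
  have hKmul : ∀ a b : G, a ^ p = 1 → b ^ p = 1 → (a * b) ^ p = 1 := by
    intro a b ha hb
    rcases eq_or_ne a 1 with rfl | ha1
    · simpa using hb
    rcases eq_or_ne b 1 with rfl | hb1
    · simpa using ha
    have hoa : orderOf a = p := by
      rcases (Nat.dvd_prime hp).mp (orderOf_dvd_of_pow_eq_one ha) with h | h
      · exact absurd (orderOf_eq_one_iff.mp h) ha1
      · exact h
    have hob : orderOf b = p := by
      rcases (Nat.dvd_prime hp).mp (orderOf_dvd_of_pow_eq_one hb) with h | h
      · exact absurd (orderOf_eq_one_iff.mp h) hb1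
      · exact h
    rcases hS a b hoa hob with h | h
    · rw [← h]; exact pow_orderOf_eq_one _
    · simp [h]
  have hKinv : ∀ g : G, g ^ p = 1 → (g⁻¹) ^ p = 1 := by
    intro g hg; rw [inv_pow, hg, inv_one]
  have hKconj : ∀ x g : G, g ^ p = 1 → (x * g * x⁻¹) ^ p = 1 := by
    intro x g hg; rw [conj_pow, hg, mul_one, mul_inv_cancel]
  -- every cycle edge gives an element with g^p = 1
  have hE : ∀ i : ZMod (2 * n + 1), (v i * v (i + 1)) ^ p = 1 := by
    intro i
    have hne : i ≠ i + 1 := by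
      intro h
      have h0 : i + 0 = i + 1 := by simp only [add_zero]; exact h
      exact zero_ne_one (add_left_cancel h0)
    obtain ⟨_, hq⟩ := (hadj i (i + 1) hne).mpr (Or.inl rfl)
    obtain ⟨k, hk⟩ := hG (v i * v (i + 1))
    have hqp : orderOf (v i * v (i + 1)) = p :=
      (Nat.prime_dvd_prime_iff_eq hq hp).mp
        (hq.dvd_of_dvd_pow (orderOf_dvd_of_pow_eq_one hk))
    rw [← hqp]; exact pow_orderOf_eq_one _
  -- chain along the cycle
  have hC : ∀ k : ℕ, (v 0 * (v ((2 * k : ℕ) : ZMod (2 * n + 1)))⁻¹) ^ p = 1 ∧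
      (v 0 * v ((2 * k + 1 : ℕ) : ZMod (2 * n + 1))) ^ p = 1 := by
    intro k
    induction k with
    | zero =>
      constructor
      · simp
      · simpa using hE 0
    | succ k ih =>
      have h1 := ih.2
      set x := v ((2 * k + 1 : ℕ) : ZMod (2 * n + 1)) with hx
      have e1 := hE ((2 * k + 1 : ℕ) : ZMod (2 * n + 1))
      set y := v (((2 * k + 1 : ℕ) : ZMod (2 * n + 1)) + 1) with hy
      have hyx : (y * x) ^ p = 1 := by
        have := hKconj x⁻¹ (x * y) e1
        simpa [mul_assoc] using this
      have hinvK : (x⁻¹ * y⁻¹) ^ p = 1 := by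
        have := hKinv _ hyx
        simpa [mul_inv_rev] using this
      have heven : (v 0 * y⁻¹) ^ p = 1 := by
        have := hKmul _ _ h1 hinvK
        simpa [mul_assoc] using this
      have hcast1 : (((2 * k + 1 : ℕ) : ZMod (2 * n + 1)) + 1) =
          ((2 * (k + 1) : ℕ) : ZMod (2 * n + 1)) := by push_cast; ring
      have heven' : (v 0 * (v ((2 * (k + 1) : ℕ) : ZMod (2 * n + 1)))⁻¹) ^ p = 1 := by
        rw [← hcast1]; exact heven
      refine ⟨heven', ?_⟩
      have e2 := hE ((2 * (k + 1) : ℕ) : ZMod (2 * n + 1))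
      have hcast2 : (((2 * (k + 1) : ℕ) : ZMod (2 * n + 1)) + 1) =
          ((2 * (k + 1) + 1 : ℕ) : ZMod (2 * n + 1)) := by push_cast; ring
      rw [hcast2] at e2
      have := hKmul _ _ heven' e2
      simpa [mul_assoc] using this
  -- v 0 * v 0 has p-th power 1
  have hv0 : (v 0 * v 0) ^ p = 1 := by
    have h := (hC n).2
    rw [show ((2 * n + 1 : ℕ) : ZMod (2 * n + 1)) = 0 from ZMod.natCast_self _] at h
    exact h
  have h2 : (v 0 * (v ((2 : ℕ) : ZMod (2 * n + 1)))⁻¹) ^ p = 1 := by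
    have := (hC 1).1; norm_num at this; exact this
  have h3 : (v 0 * v ((3 : ℕ) : ZMod (2 * n + 1))) ^ p = 1 := by
    have := (hC 1).2; norm_num at this; exact this
  have h02 : (v 0 * v ((2 : ℕ) : ZMod (2 * n + 1))) ^ p = 1 := by
    set a := v ((2 : ℕ) : ZMod (2 * n + 1)) with ha
    have h1 : ((v 0)⁻¹ * a) ^ p = 1 := by
      have := hKconj (v 0)⁻¹ (v 0 * a⁻¹)⁻¹ (hKinv _ h2)
      simpa [mul_inv_rev, mul_assoc] using this
    have := hKmul _ _ hv0 h1
    simpa [mul_assoc] using this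
  -- distinctness of small casts
  have hcastinj : ∀ a b : ℕ, a < 2 * n + 1 → b < 2 * n + 1 →
      ((a : ZMod (2 * n + 1)) = (b : ZMod (2 * n + 1))) → a = b := by
    intro a b ha hb h
    have := congrArg ZMod.val h
    rwa [ZMod.val_cast_of_lt ha, ZMod.val_cast_of_lt hb] at this
  have hne' : ∀ a b : ℕ, a < 2 * n + 1 → b < 2 * n + 1 → a ≠ b →
      ((a : ZMod (2 * n + 1)) ≠ (b : ZMod (2 * n + 1))) :=
    fun a b ha hb hab h => hab (hcastinj a b ha hb h)
  -- non-adjacency of (0,2) and (0,3)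
  have hz : (0 : ZMod (2 * n + 1)) = ((0 : ℕ) : ZMod (2 * n + 1)) := by simp
  have hne02 : (0 : ZMod (2 * n + 1)) ≠ ((2 : ℕ) : ZMod (2 * n + 1)) := by
    rw [hz]; exact hne' 0 2 (by omega) (by omega) (by omega)
  have hne03 : (0 : ZMod (2 * n + 1)) ≠ ((3 : ℕ) : ZMod (2 * n + 1)) := by
    rw [hz]; exact hne' 0 3 (by omega) (by omega) (by omega)
  have hnadj02 : ¬ (pog G).Adj (v 0) (v ((2 : ℕ) : ZMod (2 * n + 1))) := by
    intro hA
    rcases (hadj 0 _ hne02).mp hA with h | h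
    · have h' : ((2 : ℕ) : ZMod (2 * n + 1)) = ((1 : ℕ) : ZMod (2 * n + 1)) := by
        rw [h]; push_cast; ring
      exact hne' 2 1 (by omega) (by omega) (by omega) h'
    · have h' : ((0 : ℕ) : ZMod (2 * n + 1)) = ((3 : ℕ) : ZMod (2 * n + 1)) := by
        rw [← hz, h]; push_cast; ring
      exact hne' 0 3 (by omega) (by omega) (by omega) h'
  have hnadj03 : ¬ (pog G).Adj (v 0) (v ((3 : ℕ) : ZMod (2 * n + 1))) := by
    intro hA
    rcases (hadj 0 _ hne03).mp hA with h | h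
    · have h' : ((3 : ℕ) : ZMod (2 * n + 1)) = ((1 : ℕ) : ZMod (2 * n + 1)) := by
        rw [h]; push_cast; ring
      exact hne' 3 1 (by omega) (by omega) (by omega) h'
    · have h' : ((0 : ℕ) : ZMod (2 * n + 1)) = ((4 : ℕ) : ZMod (2 * n + 1)) := by
        rw [← hz, h]; push_cast; ring
      exact hne' 0 4 (by omega) (by omega) (by omega) h'
  -- non-adjacent vertices with p-th power 1 product must be inverses
  have key : ∀ b : ZMod (2 * n + 1), (0 : ZMod (2 * n + 1)) ≠ b →
      ¬ (pog G).Adj (v 0) (v b) → (v 0 * v b) ^ p = 1 → v b = (v 0)⁻¹ := by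
    intro b hb hnadj hK
    have hvne : v 0 ≠ v b := fun h => hb (hinj h)
    have hnp : ¬ (orderOf (v 0 * v b)).Prime := fun hpr => hnadj ⟨hvne, hpr⟩
    rcases (Nat.dvd_prime hp).mp (orderOf_dvd_of_pow_eq_one hK) with h | h
    · exact (mul_eq_one_iff_inv_eq.mp (orderOf_eq_one_iff.mp h)).symm
    · exact absurd (h ▸ hp) hnp
  have e2 := key _ hne02 hnadj02 h02
  have e3 := key _ hne03 hnadj03 h3
  have : ((2 : ℕ) : ZMod (2 * n + 1)) = ((3 : ℕ) : ZMod (2 * n + 1)) :=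
    hinj (e2.trans e3.symm)
  exact hne' 2 3 (by omega) (by omega) (by omega) this
end

section
/- For any odd prime p, the prime-order element graph of ℤ_{p²} contains an induced path on 4 vertices, namely 1 ~ (p−1) ~ (p+1) ~ (p²−1); in particular Γ(ℤ_{p²}) is not a cograph. -/
/-- An induced path on four vertices `a ~ b ~ c ~ d`. -/
def IsInducedP4 {V : Type*} (Γ : SimpleGraph V) (a b c d : V) : Prop :=
  a ≠ b ∧ a ≠ c ∧ a ≠ d ∧ b ≠ c ∧ b ≠ d ∧ c ≠ d ∧
    Γ.Adj a b ∧ Γ.Adj b c ∧ Γ.Adj c d ∧ ¬Γ.Adj a c ∧ ¬Γ.Adj b d ∧ ¬Γ.Adj a d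

lemma key_ne (p : ℕ) (k : ℤ) (hk : k ≠ 0) (hlt : k.natAbs < p ^ 2) :
    ((k : ZMod (p ^ 2)) ≠ 0) := by
  intro h
  rw [ZMod.intCast_zmod_eq_zero_iff_dvd] at h
  have h2 : p ^ 2 ∣ k.natAbs := by
    exact Int.natCast_dvd_natCast.mp (Int.dvd_natAbs.mpr h)
  have := Nat.le_of_dvd (Int.natAbs_pos.mpr hk) h2
  omega

theorem stmt_8 (p : ℕ) (hp : p.Prime) (hpo : Odd p) :
    IsInducedP4 (pogAdd (ZMod (p ^ 2)))
      1 ((p : ZMod (p ^ 2)) - 1) ((p : ZMod (p ^ 2)) + 1) ((p : ZMod (p ^ 2)) ^ 2 - 1) := by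
  have hp3 : 3 ≤ p := by
    have h2 := hp.two_le
    have := Nat.odd_iff.mp hpo
    omega
  have hn0 : p ^ 2 ≠ 0 := by positivity
  have hpsq : ((p : ZMod (p ^ 2))) ^ 2 = 0 := by
    have : ((p ^ 2 : ℕ) : ZMod (p ^ 2)) = 0 := ZMod.natCast_self _
    push_cast at this
    exact this
  have hd : ((p : ZMod (p ^ 2)) ^ 2 - 1) = -1 := by rw [hpsq]; ring
  -- order computations
  have hop : addOrderOf ((p : ℕ) : ZMod (p ^ 2)) = p := by
    rw [ZMod.addOrderOf_coe p hn0]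
    have hg : Nat.gcd (p ^ 2) p = p := Nat.gcd_eq_right (dvd_pow_self p (by norm_num))
    rw [hg, pow_two, Nat.mul_div_cancel _ hp.pos]
  have ho2p : addOrderOf ((2 * p : ℕ) : ZMod (p ^ 2)) = p := by
    rw [ZMod.addOrderOf_coe _ hn0]
    have hg : Nat.gcd (p ^ 2) (2 * p) = p := by
      rw [pow_two]
      rw [Nat.gcd_comm, Nat.gcd_mul_right]
      have : Nat.gcd 2 p = 1 := Nat.coprime_comm.mp hpo.coprime_two_right
      rw [this, one_mul]
    rw [hg, pow_two, Nat.mul_div_cancel _ hp.pos]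
  have hunit : ∀ a : ℕ, ¬ p ∣ a → addOrderOf ((a : ℕ) : ZMod (p ^ 2)) = p ^ 2 := by
    intro a ha
    rw [ZMod.addOrderOf_coe _ hn0]
    have hg : Nat.gcd (p ^ 2) a = 1 := (hp.coprime_iff_not_dvd.mpr ha).pow_left 2
    rw [hg, Nat.div_one]
  have hple : p + 2 < p ^ 2 := by nlinarith
  have hnd1 : ¬ p ∣ p + 2 := by
    intro h
    have : p ∣ 2 := (Nat.dvd_add_right dvd_rfl).mp h
    have := Nat.le_of_dvd (by norm_num) this
    omega
  have hnd2 : ¬ p ∣ p - 2 := by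
    intro h
    have := Nat.le_of_dvd (by omega) h
    omega
  have hnp2 : ¬ (p ^ 2).Prime := Nat.Prime.not_prime_pow (le_refl 2)
  -- distinctness via key_ne
  have ne1 : (1 : ZMod (p ^ 2)) ≠ (p : ZMod (p ^ 2)) - 1 := by
    intro h
    refine key_ne p (2 - p) (by omega) (by omega) ?_
    push_cast
    linear_combination h
  have ne2 : (1 : ZMod (p ^ 2)) ≠ (p : ZMod (p ^ 2)) + 1 := by
    intro h
    refine key_ne p (-p) (by omega) (by omega) ?_
    push_cast
    linear_combination h
  have ne3 : (1 : ZMod (p ^ 2)) ≠ (p : ZMod (p ^ 2)) ^ 2 - 1 := by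
    rw [hd]
    intro h
    refine key_ne p 2 (by omega) (by omega) ?_
    push_cast
    linear_combination h
  have ne4 : (p : ZMod (p ^ 2)) - 1 ≠ (p : ZMod (p ^ 2)) + 1 := by
    intro h
    refine key_ne p (-2) (by omega) (by omega) ?_
    push_cast
    linear_combination h
  have ne5 : (p : ZMod (p ^ 2)) - 1 ≠ (p : ZMod (p ^ 2)) ^ 2 - 1 := by
    rw [hd]
    intro h
    refine key_ne p p (by omega) (by omega) ?_
    push_cast
    linear_combination h
  have ne6 : (p : ZMod (p ^ 2)) + 1 ≠ (p : ZMod (p ^ 2)) ^ 2 - 1 := by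
    rw [hd]
    intro h
    refine key_ne p (p + 2) (by omega) (by omega) ?_
    push_cast
    linear_combination h
  refine ⟨ne1, ne2, ne3, ne4, ne5, ne6, ?_, ?_, ?_, ?_, ?_, ?_⟩
  · -- 1 ~ (p-1): sum = p
    refine ⟨ne1, ?_⟩
    have : (1 : ZMod (p ^ 2)) + ((p : ZMod (p ^ 2)) - 1) = ((p : ℕ) : ZMod (p ^ 2)) := by
      push_cast; ring
    rw [this, hop]; exact hp
  · -- (p-1) ~ (p+1): sum = 2p
    refine ⟨ne4, ?_⟩
    have : ((p : ZMod (p ^ 2)) - 1) + ((p : ZMod (p ^ 2)) + 1) = ((2 * p : ℕ) : ZMod (p ^ 2)) := by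
      push_cast; ring
    rw [this, ho2p]; exact hp
  · -- (p+1) ~ (p²-1 = -1): sum = p
    refine ⟨ne6, ?_⟩
    have : ((p : ZMod (p ^ 2)) + 1) + ((p : ZMod (p ^ 2)) ^ 2 - 1) = ((p : ℕ) : ZMod (p ^ 2)) := by
      rw [hpsq]; push_cast; ring
    rw [this, hop]; exact hp
  · -- ¬ 1 ~ (p+1): sum = p+2
    rintro ⟨-, hpr⟩
    have : (1 : ZMod (p ^ 2)) + ((p : ZMod (p ^ 2)) + 1) = ((p + 2 : ℕ) : ZMod (p ^ 2)) := by
      push_cast; ring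
    rw [this, hunit (p + 2) hnd1] at hpr
    exact hnp2 hpr
  · -- ¬ (p-1) ~ (p²-1): sum = p - 2
    rintro ⟨-, hpr⟩
    have : ((p : ZMod (p ^ 2)) - 1) + ((p : ZMod (p ^ 2)) ^ 2 - 1) = ((p - 2 : ℕ) : ZMod (p ^ 2)) := by
      rw [hpsq]
      have : ((p - 2 : ℕ) : ZMod (p ^ 2)) = (p : ZMod (p ^ 2)) - 2 := by
        have h2 : (2 : ℕ) ≤ p := by omega
        push_cast [Nat.cast_sub h2]
        ring
      rw [this]; ring
    rw [this, hunit (p - 2) hnd2] at hpr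
    exact hnp2 hpr
  · -- ¬ 1 ~ (p²-1): sum = 0
    rintro ⟨-, hpr⟩
    have : (1 : ZMod (p ^ 2)) + ((p : ZMod (p ^ 2)) ^ 2 - 1) = 0 := by rw [hpsq]; ring
    rw [this, addOrderOf_zero] at hpr
    exact hpr.one_lt.ne' rfl
end

section
/- If G is a finite group containing an element whose order is a product of two distinct primes, then the prime-order element graph Γ(G) contains an induced path on 4 vertices (is not a cograph). -/
section Aux

private lemma not_dvd_of_modEq' {p m r : ℕ} (h : m ≡ r [MOD p]) (hr : ¬ p ∣ r) : ¬ p ∣ m :=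
  fun hd => hr (Nat.modEq_zero_iff_dvd.1 (h.symm.trans (Nat.modEq_zero_iff_dvd.2 hd)))

private lemma dvd_of_modEq' {p m r : ℕ} (h : m ≡ r [MOD p]) (hr : p ∣ r) : p ∣ m :=
  Nat.modEq_zero_iff_dvd.1 (h.trans (Nat.modEq_zero_iff_dvd.2 hr))

private lemma prime_not_dvd_one {p : ℕ} (hp : p.Prime) : ¬ p ∣ 1 :=
  fun h => hp.ne_one (Nat.dvd_one.1 h)

private lemma aux_p4 {G : Type*} [Group G] [Finite G] {p q : ℕ} (hp : p.Prime) (hq : q.Prime)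
    (hpq : p ≠ q) (hq2 : q ≠ 2) (g : G) (hg : orderOf g = p * q) :
    ∃ a b c d : G, IsInducedP4 (pog G) a b c d := by
  have hcop : Nat.Coprime p q := (Nat.coprime_primes hp hq).2 hpq
  obtain ⟨A, hA⟩ := Nat.chineseRemainder hcop 0 1
  obtain ⟨C, hC⟩ := Nat.chineseRemainder hcop 1 0
  obtain ⟨D, hD⟩ := Nat.chineseRemainder hcop (p - 1) 1
  -- basic divisibility facts
  have hpp1 : ¬ p ∣ (p - 1) := by
    have h2 := hp.two_le
    exact Nat.not_dvd_of_pos_of_lt (by omega) (by omega)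
  have hq2' : ¬ q ∣ 2 := fun h => hq2 ((Nat.prime_dvd_prime_iff_eq hq Nat.prime_two).1 h)
  have pA : p ∣ A := Nat.modEq_zero_iff_dvd.1 hA.1
  have nqA : ¬ q ∣ A := not_dvd_of_modEq' hA.2 (prime_not_dvd_one hq)
  have qC : q ∣ C := Nat.modEq_zero_iff_dvd.1 hC.2
  have npC : ¬ p ∣ C := not_dvd_of_modEq' hC.1 (prime_not_dvd_one hp)
  have npD : ¬ p ∣ D := not_dvd_of_modEq' hD.1 hpp1
  have nqD : ¬ q ∣ D := not_dvd_of_modEq' hD.2 (prime_not_dvd_one hq)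
  have pCD : p ∣ C + D := dvd_of_modEq' (hC.1.add hD.1) (by
    have h2 := hp.one_le
    have : 1 + (p - 1) = p := by omega
    rw [this])
  have nqCD : ¬ q ∣ C + D := not_dvd_of_modEq' (hC.2.add hD.2)
    (by simpa using prime_not_dvd_one hq)
  have npAC : ¬ p ∣ A + C := not_dvd_of_modEq' (hA.1.add hC.1)
    (by simpa using prime_not_dvd_one hp)
  have nqAC : ¬ q ∣ A + C := not_dvd_of_modEq' (hA.2.add hC.2)
    (by simpa using prime_not_dvd_one hq)
  have npAD : ¬ p ∣ A + D := not_dvd_of_modEq' (hA.1.add hD.1) (by simpa using hpp1)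
  have nqAD : ¬ q ∣ A + D := not_dvd_of_modEq' (hA.2.add hD.2) hq2'
  -- order computations
  have hne0 : ∀ {r s : ℕ}, r.Prime → ¬ r ∣ s → s ≠ 0 := by
    intro r s _ h hs; exact h (hs ▸ dvd_zero r)
  have ordq : ∀ s : ℕ, p ∣ s → ¬ q ∣ s → orderOf (g ^ s) = q := by
    intro s hps hqs
    rw [orderOf_pow' g (hne0 hq hqs), hg]
    have hco : Nat.Coprime q s := (Nat.Prime.coprime_iff_not_dvd hq).2 hqs
    have : Nat.gcd (p * q) s = Nat.gcd p s := by
      rw [mul_comm]; exact hco.gcd_mul_left_cancel p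
    rw [this, Nat.gcd_eq_left hps]
    exact Nat.mul_div_cancel_left q hp.pos
  have ordp : ∀ s : ℕ, q ∣ s → ¬ p ∣ s → orderOf (g ^ s) = p := by
    intro s hqs hps
    rw [orderOf_pow' g (hne0 hp hps), hg]
    have hco : Nat.Coprime p s := (Nat.Prime.coprime_iff_not_dvd hp).2 hps
    have : Nat.gcd (p * q) s = Nat.gcd q s := hco.gcd_mul_left_cancel q
    rw [this, Nat.gcd_eq_left hqs]
    exact Nat.mul_div_cancel p hq.pos
  have ordpq : ∀ s : ℕ, ¬ p ∣ s → ¬ q ∣ s → ¬ (orderOf (g ^ s)).Prime := by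
    intro s hps hqs
    have hcop' : Nat.Coprime (p * q) s :=
      Nat.Coprime.mul ((Nat.Prime.coprime_iff_not_dvd hp).2 hps)
        ((Nat.Prime.coprime_iff_not_dvd hq).2 hqs)
    rw [orderOf_pow' g (hne0 hp hps), hg, hcop', Nat.div_one]
    intro hpr
    rcases (Nat.prime_mul_iff.1 hpr) with ⟨_, h1⟩ | ⟨_, h1⟩
    · exact hq.ne_one h1
    · exact hp.ne_one h1
  -- distinctness helpers
  have hnep : ∀ s t : ℕ, ¬ (s ≡ t [MOD p]) → g ^ s ≠ g ^ t := by
    intro s t h heq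
    rw [pow_eq_pow_iff_modEq, hg] at heq
    exact h (heq.of_mul_right q)
  have hneq : ∀ s t : ℕ, ¬ (s ≡ t [MOD q]) → g ^ s ≠ g ^ t := by
    intro s t h heq
    rw [pow_eq_pow_iff_modEq, hg] at heq
    exact h (heq.of_mul_left p)
  refine ⟨g ^ A, g ^ (0 : ℕ), g ^ C, g ^ D, ?_, ?_, ?_, ?_, ?_, ?_, ?_, ?_, ?_, ?_, ?_, ?_⟩
  · exact hneq A 0 fun h => nqA (Nat.modEq_zero_iff_dvd.1 h)
  · exact hnep A C fun h => npC (Nat.modEq_zero_iff_dvd.1 (h.symm.trans hA.1))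
  · exact hnep A D fun h => npD (Nat.modEq_zero_iff_dvd.1 (h.symm.trans hA.1))
  · exact hnep 0 C fun h => npC (Nat.modEq_zero_iff_dvd.1 h.symm)
  · exact hnep 0 D fun h => npD (Nat.modEq_zero_iff_dvd.1 h.symm)
  · exact hneq C D fun h => nqD (Nat.modEq_zero_iff_dvd.1 (h.symm.trans hC.2))
  · refine ⟨hneq A 0 fun h => nqA (Nat.modEq_zero_iff_dvd.1 h), ?_⟩
    rw [← pow_add, ordq (A + 0) (by simpa using pA) (by simpa using nqA)]
    exact hq
  · refine ⟨hnep 0 C fun h => npC (Nat.modEq_zero_iff_dvd.1 h.symm), ?_⟩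
    rw [← pow_add, ordp (0 + C) (by simpa using qC) (by simpa using npC)]
    exact hp
  · refine ⟨hneq C D fun h => nqD (Nat.modEq_zero_iff_dvd.1 (h.symm.trans hC.2)), ?_⟩
    rw [← pow_add, ordq (C + D) pCD nqCD]
    exact hq
  · rintro ⟨-, hpr⟩
    rw [← pow_add] at hpr
    exact ordpq (A + C) npAC nqAC hpr
  · rintro ⟨-, hpr⟩
    rw [← pow_add] at hpr
    exact ordpq (0 + D) (by simpa using npD) (by simpa using nqD) hpr
  · rintro ⟨-, hpr⟩
    rw [← pow_add] at hpr
    exact ordpq (A + D) npAD nqAD hpr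

end Aux

theorem stmt_10 (G : Type*) [Group G] [Fintype G] (p q : ℕ) (hp : p.Prime) (hq : q.Prime)
    (hpq : p ≠ q) (g : G) (hg : orderOf g = p * q) :
    ∃ a b c d : G, IsInducedP4 (pog G) a b c d := by
  by_cases h2 : q = 2
  · exact aux_p4 hq hp hpq.symm (h2 ▸ hpq) g (by rw [hg, mul_comm])
  · exact aux_p4 hp hq hpq h2 g hg
end

section
/- Let p be an odd prime and G a finite p-group. Then the prime-order element graph Γ(G) is a cograph (has no induced P₄) if and only if G has exponent p (every nonidentity element has order p). -/
lemma my_aux (p : ℕ) (hp : p.Prime) (hp3 : 3 ≤ p) {G : Type*} [Group G] [Finite G] (x : G)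
    (hx : orderOf x = p ^ 2) :
    IsInducedP4 (pog G) x (x ^ (p - 1)) (x ^ (p + 1)) (x ^ (p ^ 2 - 1)) := by
  have hq1 : p * p = p ^ 2 := (sq p).symm
  have hqp : 2 * p + 2 ≤ p ^ 2 := by nlinarith
  -- injectivity on small exponents
  have hinj : ∀ i j : ℕ, i < p ^ 2 → j < p ^ 2 → x ^ i = x ^ j → i = j := by
    intro i j hi hj h
    rw [pow_eq_pow_iff_modEq, hx, Nat.ModEq, Nat.mod_eq_of_lt hi, Nat.mod_eq_of_lt hj] at h
    exact h
  have hne : ∀ i j : ℕ, i < p ^ 2 → j < p ^ 2 → i ≠ j → x ^ i ≠ x ^ j :=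
    fun i j hi hj hij h => hij (hinj i j hi hj h)
  have hxsq : x ^ (p ^ 2) = 1 := by rw [← hx]; exact pow_orderOf_eq_one x
  have hcop2 : Nat.Coprime p 2 := (Nat.coprime_primes hp Nat.prime_two).mpr (by omega)
  have hgcd_p : Nat.gcd (p ^ 2) p = p := Nat.gcd_eq_right (dvd_pow_self p (by norm_num))
  have hop : orderOf (x ^ p) = p := by
    rw [orderOf_pow, hx, hgcd_p, sq, Nat.mul_div_cancel _ hp.pos]
  have ho2p : orderOf (x ^ (2 * p)) = p := by
    rw [orderOf_pow, hx]
    have : Nat.gcd (p ^ 2) (2 * p) = p := by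
      rw [sq, Nat.gcd_mul_right]
      have : Nat.gcd p 2 = 1 := hcop2
      rw [this, one_mul]
    rw [this, sq, Nat.mul_div_cancel _ hp.pos]
  have hcop_of : ∀ k : ℕ, ¬ p ∣ k → orderOf (x ^ k) = p ^ 2 := by
    intro k hk
    rw [orderOf_pow, hx]
    have : Nat.Coprime (p ^ 2) k := Nat.Coprime.pow_left _ ((hp.coprime_iff_not_dvd).mpr hk)
    rw [Nat.Coprime] at this
    rw [this, Nat.div_one]
  have hnp2 : ¬ (p ^ 2).Prime := by
    rw [sq]
    exact Nat.not_prime_mul (by omega) (by omega)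
  -- products
  have e_ab : x * x ^ (p - 1) = x ^ p := by
    rw [← pow_succ']; congr 1; omega
  have e_bc : x ^ (p - 1) * x ^ (p + 1) = x ^ (2 * p) := by rw [← pow_add]; congr 1; omega
  have e_cd : x ^ (p + 1) * x ^ (p ^ 2 - 1) = x ^ p := by
    rw [← pow_add, show (p + 1) + (p ^ 2 - 1) = p ^ 2 + p by omega, pow_add, hxsq, one_mul]
  have e_ac : x * x ^ (p + 1) = x ^ (p + 2) := by
    rw [← pow_succ']
  have e_bd : x ^ (p - 1) * x ^ (p ^ 2 - 1) = x ^ (p - 2) := by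
    rw [← pow_add, show (p - 1) + (p ^ 2 - 1) = p ^ 2 + (p - 2) by omega, pow_add, hxsq, one_mul]
  have e_ad : x * x ^ (p ^ 2 - 1) = 1 := by
    rw [← pow_succ', show (p ^ 2 - 1) + 1 = p ^ 2 by omega, hxsq]
  have nd1 : ¬ p ∣ p + 2 := by
    intro h
    have := (Nat.dvd_add_right (dvd_refl p)).mp h
    exact absurd (Nat.le_of_dvd (by norm_num) this) (by omega)
  have nd2 : ¬ p ∣ p - 2 := Nat.not_dvd_of_pos_of_lt (by omega) (by omega)
  refine ⟨?_, ?_, ?_, ?_, ?_, ?_, ?_, ?_, ?_, ?_, ?_, ?_⟩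
  · intro h; exact absurd (hinj 1 (p - 1) (by omega) (by omega) (by rwa [pow_one])) (by omega)
  · intro h; exact absurd (hinj 1 (p + 1) (by omega) (by omega) (by rwa [pow_one])) (by omega)
  · intro h
    exact absurd (hinj 1 (p ^ 2 - 1) (by omega) (by omega) (by rwa [pow_one])) (by omega)
  · exact hne (p - 1) (p + 1) (by omega) (by omega) (by omega)
  · exact hne (p - 1) (p ^ 2 - 1) (by omega) (by omega) (by omega)
  · exact hne (p + 1) (p ^ 2 - 1) (by omega) (by omega) (by omega)
  · refine ⟨fun h => ?_, by rw [e_ab, hop]; exact hp⟩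
    exact absurd (hinj 1 (p - 1) (by omega) (by omega) (by rwa [pow_one])) (by omega)
  · exact ⟨hne (p - 1) (p + 1) (by omega) (by omega) (by omega),
      by rw [e_bc, ho2p]; exact hp⟩
  · exact ⟨hne (p + 1) (p ^ 2 - 1) (by omega) (by omega) (by omega),
      by rw [e_cd, hop]; exact hp⟩
  · rintro ⟨-, hpr⟩
    rw [e_ac, hcop_of (p + 2) nd1] at hpr
    exact hnp2 hpr
  · rintro ⟨-, hpr⟩
    rw [e_bd, hcop_of (p - 2) nd2] at hpr
    exact hnp2 hpr
  · rintro ⟨-, hpr⟩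
    rw [e_ad, orderOf_one] at hpr
    exact hpr.one_lt.ne' rfl

theorem stmt_12 (p : ℕ) (hp : p.Prime) (hpo : Odd p) (G : Type*) [Group G] [Fintype G]
    (hG : IsPGroup p G) :
    (¬∃ a b c d : G, IsInducedP4 (pog G) a b c d) ↔
      ∀ g : G, g ≠ 1 → orderOf g = p := by
  have hodd : p % 2 = 1 := Nat.odd_iff.mp hpo
  have hp3 : 3 ≤ p := by have := hp.two_le; omega
  constructor
  · intro hno g hg
    by_contra hgo
    obtain ⟨k, hk⟩ := hG g
    obtain ⟨m, hmk, hm⟩ := (Nat.dvd_prime_pow hp).mp (orderOf_dvd_of_pow_eq_one hk)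
    have hm0 : m ≠ 0 := by rintro rfl; rw [pow_zero] at hm; exact hg (orderOf_eq_one_iff.mp hm)
    have hm1 : m ≠ 1 := by rintro rfl; rw [pow_one] at hm; exact hgo hm
    have hox : orderOf (g ^ (p ^ (m - 2))) = p ^ 2 := by
      rw [orderOf_pow, hm, Nat.gcd_eq_right (pow_dvd_pow p (by omega)),
        Nat.pow_div (by omega) hp.pos, show m - (m - 2) = 2 by omega]
    exact hno ⟨_, _, _, _, my_aux p hp hp3 _ hox⟩
  · intro hexp h
    obtain ⟨a, b, c, d, h⟩ := h
    unfold IsInducedP4 at h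
    obtain ⟨hab, hac, had, hbc, hbd, hcd, Aab, Abc, Acd, nAac, nAbd, nAad⟩ := h
    have hc : a * c = 1 := by
      by_contra h'
      exact nAac ⟨hac, by rw [hexp _ h']; exact hp⟩
    have hd : a * d = 1 := by
      by_contra h'
      exact nAad ⟨had, by rw [hexp _ h']; exact hp⟩
    exact hcd (mul_left_cancel (hc.trans hd.symm))
end

section
/- Let G be a finite non-cyclic abelian 2-group. Then the prime-order element graph Γ(G) is a cograph if and only if the exponent of G is at most 4. -/
section Aux

variable {G : Type*} [CommGroup G]

lemma pog_adj_iff (hG : IsPGroup 2 G) {x y : G} :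
    (pog G).Adj x y ↔ x ≠ y ∧ x * y ≠ 1 ∧ (x * y) ^ 2 = 1 := by
  constructor
  · rintro ⟨hxy, hp⟩
    obtain ⟨k, hk⟩ := hG (x * y)
    have hdvd : orderOf (x * y) ∣ 2 ^ k := orderOf_dvd_of_pow_eq_one hk
    have h2 : orderOf (x * y) = 2 :=
      (Nat.prime_dvd_prime_iff_eq hp Nat.prime_two).mp (hp.dvd_of_dvd_pow hdvd)
    refine ⟨hxy, ?_, ?_⟩
    · intro h
      rw [h, orderOf_one] at hp
      exact Nat.not_prime_one hp
    · rw [← h2]; exact pow_orderOf_eq_one _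
  · rintro ⟨hxy, h1, h2⟩
    haveI : Fact (Nat.Prime 2) := ⟨Nat.prime_two⟩
    exact ⟨hxy, by rw [orderOf_eq_prime h2 h1]; exact Nat.prime_two⟩

lemma exists_two_involutions [Fintype G] (hG : IsPGroup 2 G) (hnc : ¬IsCyclic G) :
    ∃ s t : G, s ^ 2 = 1 ∧ t ^ 2 = 1 ∧ s ≠ 1 ∧ t ≠ 1 ∧ s ≠ t := by
  classical
  by_contra hcon
  push_neg at hcon
  apply hnc
  apply isCyclic_of_card_pow_eq_one_le
  -- the set of square roots of 1 has at most 2 elements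
  have hΩ : (Finset.univ.filter fun a : G => a ^ 2 = 1).card ≤ 2 := by
    by_cases hex : ∃ s ∈ Finset.univ.filter fun a : G => a ^ 2 = 1, s ≠ 1
    · obtain ⟨s, hs, hs1⟩ := hex
      have hs2 : s ^ 2 = 1 := (Finset.mem_filter.mp hs).2
      have hsub : (Finset.univ.filter fun a : G => a ^ 2 = 1) ⊆ {1, s} := by
        intro u hu
        have hu2 : u ^ 2 = 1 := (Finset.mem_filter.mp hu).2
        rcases eq_or_ne u 1 with h | h
        · simp [h]
        · have := hcon u s hu2 hs2 h hs1
          simp [this]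
      calc (Finset.univ.filter fun a : G => a ^ 2 = 1).card ≤ ({1, s} : Finset G).card :=
            Finset.card_le_card hsub
        _ ≤ 2 := Finset.card_insert_le _ _ |>.trans (by simp)
    · push_neg at hex
      have hsub : (Finset.univ.filter fun a : G => a ^ 2 = 1) ⊆ {1} := by
        intro u hu
        simp [hex u hu]
      exact (Finset.card_le_card hsub).trans (by simp)
  -- fibers of squaring have at most 2 elements
  have hfib : ∀ (S : Finset G) (b : G), (S.filter fun x => x ^ 2 = b).card ≤ 2 := by
    intro S b
    rcases (S.filter fun x => x ^ 2 = b).eq_empty_or_nonempty with h | ⟨x₀, hx₀⟩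
    · simp [h]
    · have hx₀2 : x₀ ^ 2 = b := (Finset.mem_filter.mp hx₀).2
      refine le_trans (Finset.card_le_card_of_injOn (fun x => x * x₀⁻¹) ?_ ?_) hΩ
      · intro x hx
        have hx2 : x ^ 2 = b := (Finset.mem_filter.mp hx).2
        simp only [Finset.mem_coe, Finset.mem_filter, Finset.mem_univ, true_and]
        rw [mul_pow, inv_pow, hx2, hx₀2, mul_inv_cancel]
      · intro x _ y _ h
        exact mul_right_cancel h
  -- the number of solutions of x ^ (2 ^ j) = 1 is at most 2 ^ j
  have key : ∀ j : ℕ, (Finset.univ.filter fun a : G => a ^ 2 ^ j = 1).card ≤ 2 ^ j := by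
    intro j
    induction j with
    | zero =>
      have hsub : (Finset.univ.filter fun a : G => a ^ 2 ^ 0 = 1) ⊆ {1} := by
        intro a ha
        simp only [pow_zero, pow_one, Finset.mem_filter] at ha
        simp [ha.2]
      simpa using Finset.card_le_card hsub
    | succ j ih =>
      set S := Finset.univ.filter fun a : G => a ^ 2 ^ (j + 1) = 1 with hS
      have h1 : S.card ≤ 2 * (S.image fun x => x ^ 2).card := by
        apply Finset.card_le_mul_card_image
        intro b _
        exact hfib S b
      have h2 : (S.image fun x => x ^ 2) ⊆ Finset.univ.filter fun a : G => a ^ 2 ^ j = 1 := by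
        intro b hb
        obtain ⟨a, ha, rfl⟩ := Finset.mem_image.mp hb
        have ha1 : a ^ 2 ^ (j + 1) = 1 := (Finset.mem_filter.mp ha).2
        simp only [Finset.mem_filter, Finset.mem_univ, true_and]
        rw [← pow_mul, ← pow_succ']
        exact ha1
      calc S.card ≤ 2 * (S.image fun x => x ^ 2).card := h1
        _ ≤ 2 * 2 ^ j := by
            exact Nat.mul_le_mul_left 2 ((Finset.card_le_card h2).trans (ih))
        _ = 2 ^ (j + 1) := (pow_succ' 2 j).symm
  intro n hn
  set v := n.factorization 2 with hv
  have hsub : (Finset.univ.filter fun a : G => a ^ n = 1)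
      ⊆ Finset.univ.filter fun a : G => a ^ 2 ^ v = 1 := by
    intro a ha
    have han : a ^ n = 1 := (Finset.mem_filter.mp ha).2
    obtain ⟨k, hk⟩ := (IsPGroup.iff_orderOf.mp hG) a
    have hdvd : (2 : ℕ) ^ k ∣ n := hk ▸ orderOf_dvd_of_pow_eq_one han
    have hkv : k ≤ v := (Nat.Prime.pow_dvd_iff_le_factorization Nat.prime_two hn.ne').mp hdvd
    simp only [Finset.mem_filter, Finset.mem_univ, true_and]
    exact orderOf_dvd_iff_pow_eq_one.mp (hk ▸ pow_dvd_pow 2 hkv)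
  calc (Finset.univ.filter fun a : G => a ^ n = 1).card
      ≤ (Finset.univ.filter fun a : G => a ^ 2 ^ v = 1).card := Finset.card_le_card hsub
    _ ≤ 2 ^ v := key v
    _ ≤ n := Nat.le_of_dvd hn (Nat.ordProj_dvd n 2)

end Aux

theorem stmt_13 (G : Type*) [CommGroup G] [Fintype G] (hG : IsPGroup 2 G)
    (hnc : ¬IsCyclic G) :
    (¬∃ a b c d : G, IsInducedP4 (pog G) a b c d) ↔ ∀ g : G, g ^ 4 = 1 := by
  constructor
  · intro h
    by_contra hcon
    push_neg at hcon
    obtain ⟨g, hg4⟩ := hcon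
    obtain ⟨s, t, hs2, ht2, hs1, ht1, hst⟩ := exists_two_involutions hG hnc
    -- g ^ 2 is not equal to any square root of 1
    have key : ∀ x : G, x ^ 2 = 1 → g ^ 2 ≠ x := by
      intro x hx hgx
      apply hg4
      calc g ^ 4 = (g ^ 2) ^ 2 := by rw [← pow_mul]
        _ = x ^ 2 := by rw [hgx]
        _ = 1 := hx
    apply h
    have hst2 : (s * t) ^ 2 = 1 := by rw [mul_pow, hs2, ht2, mul_one]
    have htinv : t⁻¹ = t := inv_eq_of_mul_eq_one_left (by rw [← pow_two]; exact ht2)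
    have hst1 : s * t ≠ 1 := by
      intro hEq
      exact hst ((eq_inv_of_mul_eq_one_left hEq).trans htinv)
    have P1 : g * (g⁻¹ * s) = s := by rw [mul_inv_cancel_left]
    have P2 : (g⁻¹ * s) * (g * (s * t)) = t := by
      rw [mul_mul_mul_comm, inv_mul_cancel, one_mul, ← mul_assoc, ← pow_two, hs2, one_mul]
    have P3 : (g * (s * t)) * g⁻¹ = s * t := mul_inv_cancel_comm g (s * t)
    -- the six distinctness facts
    have D1 : g ≠ g⁻¹ * s := by
      intro hEq
      apply key s hs2
      have h2 : g * g = g * (g⁻¹ * s) := by rw [← hEq]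
      rw [P1] at h2
      rw [pow_two]
      exact h2
    have D2 : g ≠ g * (s * t) := by
      intro hEq
      apply hst
      have h2 : g * (s * t) = g * 1 := by rw [mul_one, ← hEq]
      have h3 : s * t = 1 := mul_left_cancel h2
      exact (eq_inv_of_mul_eq_one_left h3).trans htinv
    have D3 : g ≠ g⁻¹ := by
      intro hEq
      apply key 1 (one_pow 2)
      have h2 : g * g = g * g⁻¹ := by rw [← hEq]
      rw [mul_inv_cancel] at h2
      rw [pow_two]
      exact h2
    have D4 : g⁻¹ * s ≠ g * (s * t) := by
      intro hEq
      apply key t ht2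
      have h1 := P2
      rw [hEq] at h1
      have h2 : (g * (s * t)) ^ 2 = t := by rw [pow_two]; exact h1
      rw [mul_pow, hst2, mul_one] at h2
      exact h2
    have D5 : g⁻¹ * s ≠ g⁻¹ := by
      intro hEq
      apply hs1
      have h2 : g⁻¹ * s = g⁻¹ * 1 := by rw [mul_one]; exact hEq
      exact mul_left_cancel h2
    have D6 : g * (s * t) ≠ g⁻¹ := by
      intro hEq
      apply key ((s * t)⁻¹) (by rw [inv_pow, hst2, inv_one])
      have h1 : g * (g * (s * t)) = 1 := by rw [hEq, mul_inv_cancel]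
      rw [← mul_assoc, ← pow_two] at h1
      exact eq_inv_of_mul_eq_one_left h1
    refine ⟨g, g⁻¹ * s, g * (s * t), g⁻¹, D1, D2, D3, D4, D5, D6, ?_, ?_, ?_, ?_, ?_, ?_⟩
    · rw [pog_adj_iff hG, P1]
      exact ⟨D1, hs1, hs2⟩
    · rw [pog_adj_iff hG, P2]
      exact ⟨D4, ht1, ht2⟩
    · rw [pog_adj_iff hG, P3]
      exact ⟨D6, hst1, hst2⟩
    · rw [pog_adj_iff hG]
      rintro ⟨-, -, hsq⟩
      apply hg4
      rw [← mul_assoc, ← pow_two, mul_pow, hst2, mul_one, ← pow_mul] at hsq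
      norm_num at hsq
      exact hsq
    · rw [pog_adj_iff hG]
      rintro ⟨-, -, hsq⟩
      apply hg4
      rw [mul_right_comm, ← mul_inv, ← pow_two, mul_pow, hs2, mul_one, inv_pow, ← pow_mul,
        inv_eq_one] at hsq
      norm_num at hsq
      exact hsq
    · rw [pog_adj_iff hG]
      rintro ⟨-, habs, -⟩
      exact habs (mul_inv_cancel g)
  · intro hexp hP4
    obtain ⟨a, b, c, d, hab, hac, had, hbc, hbd, hcd, Aab, Abc, Acd, Nac, Nbd, Nad⟩ := hP4
    rw [pog_adj_iff hG] at Aab Abc Acd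
    obtain ⟨-, hab1, hab2⟩ := Aab
    obtain ⟨-, hbc1, hbc2⟩ := Abc
    obtain ⟨-, hcd1, hcd2⟩ := Acd
    rw [mul_pow] at hab2 hbc2 hcd2
    have h1 : a ^ 2 = (b ^ 2)⁻¹ := eq_inv_of_mul_eq_one_left hab2
    have h2 : c ^ 2 = (b ^ 2)⁻¹ := eq_inv_of_mul_eq_one_left (by rwa [mul_comm] at hbc2)
    -- a*c has square 1, so non-adjacency forces a*c = 1
    have hac2 : (a * c) ^ 2 = 1 := by
      rw [mul_pow, h2, ← h1, ← pow_add]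
      exact hexp a
    have hacm : a * c = 1 := by
      by_contra hne
      exact Nac ((pog_adj_iff hG).mpr ⟨hac, hne, hac2⟩)
    have hd2 : d ^ 2 = (c ^ 2)⁻¹ := eq_inv_of_mul_eq_one_left (by rwa [mul_comm] at hcd2)
    have hbd2 : (b * d) ^ 2 = 1 := by
      rw [mul_pow, hd2, h2, inv_inv, ← pow_add]
      exact hexp b
    have hbdm : b * d = 1 := by
      by_contra hne
      exact Nbd ((pog_adj_iff hG).mpr ⟨hbd, hne, hbd2⟩)
    -- now a*d is an involution, so Adj a d, contradiction
    have hdb : d = b⁻¹ := eq_inv_of_mul_eq_one_right hbdm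
    have had2 : (a * d) ^ 2 = 1 := by
      rw [mul_pow, hdb, inv_pow, ← h1, ← pow_add]
      exact hexp a
    have had1 : a * d ≠ 1 := by
      intro hEq
      apply hab
      have : a * d = b * d := by rw [hEq, hbdm]
      exact mul_right_cancel this
    exact Nad ((pog_adj_iff hG).mpr ⟨had, had1, had2⟩)
end

section
/- If G is a finite group with |G| = m or |G| = 2m for odd m, and the prime-order element graph Γ(G) is a cograph, then every nonidentity element of G has prime order. -/
section helpers
variable {G : Type*} [Group G] [Fintype G]

set_option linter.unusedSectionVars false

lemma adjPow (h : G) (i j : ℕ) (hne : h ^ i ≠ h ^ j)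
    (hp : (orderOf (h ^ (i + j))).Prime) : (pog G).Adj (h ^ i) (h ^ j) :=
  ⟨hne, by rwa [pow_add] at hp⟩

lemma nonadjPow (h : G) (i j : ℕ)
    (hp : ¬ (orderOf (h ^ (i + j))).Prime) : ¬ (pog G).Adj (h ^ i) (h ^ j) := by
  rintro ⟨_, hpr⟩
  rw [← pow_add] at hpr
  exact hp hpr

lemma powNe (h : G) {N i j : ℕ} (hN : orderOf h = N) (hij : i ≠ j)
    (hi : i < N) (hj : j < N) : h ^ i ≠ h ^ j :=
  fun e => hij (pow_injOn_Iio_orderOf (Set.mem_Iio.mpr (by rw [hN]; exact hi))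
    (Set.mem_Iio.mpr (by rw [hN]; exact hj)) e)

lemma ord_pow_fac (h : G) {p t k u : ℕ} (hN : orderOf h = p * t)
    (hk : k = p * u) (hcop : Nat.gcd t u = 1) (hp : 0 < p) :
    orderOf (h ^ k) = t := by
  rw [orderOf_pow, hN, hk, Nat.gcd_mul_left, hcop, mul_one, Nat.mul_div_cancel_left _ hp]

lemma ord_pow_cop (h : G) {N k : ℕ} (hN : orderOf h = N) (hcop : Nat.gcd N k = 1) :
    orderOf (h ^ k) = N := by rw [orderOf_pow, hN, hcop, Nat.div_one]

lemma ord_pow_id (h : G) {N k : ℕ} (hN : orderOf h = N) (hk : k = N) :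
    orderOf (h ^ k) = 1 := by
  rw [hk, ← hN, pow_orderOf_eq_one, orderOf_one]

end helpers

lemma not_prime_mul' {p q : ℕ} (hp : 2 ≤ p) (hq : 2 ≤ q) : ¬ (p * q).Prime := by
  intro hpr
  rcases Nat.prime_mul_iff.mp hpr with ⟨_, h1⟩ | ⟨_, h1⟩ <;> omega

lemma not_dvd_of (p m r : ℕ) (h0 : 0 < r) (hr : r < p) : ¬ p ∣ (p * m + r) := by
  intro hd
  have h2 : p ∣ r := (Nat.dvd_add_right (dvd_mul_right p m)).mp hd
  have := Nat.le_of_dvd h0 h2; omega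

lemma not_dvd_of' {q s : ℕ} (h0 : 0 < s) (h1 : s ≠ q) (h2 : s < 2 * q) : ¬ q ∣ s := by
  rintro ⟨c, rfl⟩
  have hc1 : c ≠ 0 := by rintro rfl; simp at h0
  have hc2 : c ≠ 1 := by rintro rfl; simp at h1
  have hc : 2 ≤ c := by omega
  have := Nat.mul_le_mul_left q hc
  omega

lemma coprime_of_not_dvd {p q s : ℕ} (hp : p.Prime) (hq : q.Prime)
    (h1 : ¬ p ∣ s) (h2 : ¬ q ∣ s) : Nat.gcd (p * q) s = 1 :=
  Nat.Coprime.mul ((hp.coprime_iff_not_dvd).2 h1) ((hq.coprime_iff_not_dvd).2 h2)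

/-- Case: an element of order `p²`, `p` an odd prime, gives an induced P4. -/
lemma caseP2 {G : Type*} [Group G] [Fintype G] (h : G) (p : ℕ)
    (hp : p.Prime) (hp2 : p ≠ 2) (hN : orderOf h = p * p) :
    ∃ a b c d : G, IsInducedP4 (pog G) a b c d := by
  have hp3 : 3 ≤ p := by have := hp.two_le; omega
  have hppos : 0 < p := by omega
  have hs3 : p * 3 ≤ p * p := Nat.mul_le_mul_left p hp3
  refine ⟨h ^ (p - 1), h ^ 1, h ^ (2 * p - 1), h ^ (p * p - p + 1), ?_, ?_, ?_, ?_, ?_, ?_,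
    ?_, ?_, ?_, ?_, ?_, ?_⟩
  · exact powNe h hN (by omega) (by omega) (by omega)
  · exact powNe h hN (by omega) (by omega) (by omega)
  · exact powNe h hN (by omega) (by omega) (by omega)
  · exact powNe h hN (by omega) (by omega) (by omega)
  · exact powNe h hN (by omega) (by omega) (by omega)
  · exact powNe h hN (by omega) (by omega) (by omega)
  · -- a ~ b : sum = p
    refine adjPow h _ _ (powNe h hN (by omega) (by omega) (by omega)) ?_
    have hcop : Nat.gcd p 1 = 1 := Nat.gcd_one_right p
    have : orderOf (h ^ ((p - 1) + 1)) = p :=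
      ord_pow_fac h hN (show (p - 1) + 1 = p * 1 from by omega) hcop hppos
    rw [this]; exact hp
  · -- b ~ c : sum = 2p
    refine adjPow h _ _ (powNe h hN (by omega) (by omega) (by omega)) ?_
    have hcop : Nat.gcd p 2 = 1 :=
      (hp.coprime_iff_not_dvd).2 (by intro hd; have := Nat.le_of_dvd (by norm_num) hd; omega)
    have : orderOf (h ^ (1 + (2 * p - 1))) = p :=
      ord_pow_fac h hN (show 1 + (2 * p - 1) = p * 2 from by omega) hcop hppos
    rw [this]; exact hp
  · -- c ~ d : sum = p*p + p = p*(p+1)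
    refine adjPow h _ _ (powNe h hN (by omega) (by omega) (by omega)) ?_
    have hcop : Nat.gcd p (p + 1) = 1 := by simp
    have hkey : (2 * p - 1) + (p * p - p + 1) = p * (p + 1) := by
      have : p * (p + 1) = p * p + p * 1 := by ring
      omega
    have : orderOf (h ^ ((2 * p - 1) + (p * p - p + 1))) = p :=
      ord_pow_fac h hN hkey hcop hppos
    rw [this]; exact hp
  · -- a ≁ c : sum = 3p - 2, coprime to p*p
    refine nonadjPow h _ _ ?_
    have hnd : ¬ p ∣ ((p - 1) + (2 * p - 1)) := by
      rw [show (p - 1) + (2 * p - 1) = p * 2 + (p - 2) from by omega]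
      exact not_dvd_of p 2 (p - 2) (by omega) (by omega)
    have : orderOf (h ^ ((p - 1) + (2 * p - 1))) = p * p :=
      ord_pow_cop h hN (coprime_of_not_dvd hp hp hnd hnd)
    rw [this]; exact not_prime_mul' hp.two_le hp.two_le
  · -- b ≁ d : sum = p*p - p + 2 = p*(p-1) + 2
    refine nonadjPow h _ _ ?_
    have hnd : ¬ p ∣ (1 + (p * p - p + 1)) := by
      have haux : p * (p - 1) + p = p * p := by
        have h1 : p * ((p - 1) + 1) = p * (p - 1) + p * 1 := by ring
        have h2 : (p - 1) + 1 = p := by omega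
        rw [h2] at h1; omega
      rw [show 1 + (p * p - p + 1) = p * (p - 1) + 2 from by omega]
      exact not_dvd_of p (p - 1) 2 (by norm_num) (by omega)
    have : orderOf (h ^ (1 + (p * p - p + 1))) = p * p :=
      ord_pow_cop h hN (coprime_of_not_dvd hp hp hnd hnd)
    rw [this]; exact not_prime_mul' hp.two_le hp.two_le
  · -- a ≁ d : sum = p*p
    refine nonadjPow h _ _ ?_
    rw [ord_pow_id h hN (by omega)]
    exact Nat.not_prime_one

/-- Case: an element of order `2q`, `q` an odd prime, gives an induced P4. -/
lemma case2Q {G : Type*} [Group G] [Fintype G] (h : G) (q : ℕ)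
    (hq : q.Prime) (hq2 : q ≠ 2) (hN : orderOf h = 2 * q) :
    ∃ a b c d : G, IsInducedP4 (pog G) a b c d := by
  have hq3 : 3 ≤ q := by have := hq.two_le; omega
  obtain ⟨l, hl⟩ := hq.odd_of_ne_two hq2
  have hl1 : 1 ≤ l := by omega
  have hN' : orderOf h = q * 2 := by rw [hN, mul_comm]
  refine ⟨h ^ (q + 1), h ^ (2 * q - 1), h ^ q, h ^ 1, ?_, ?_, ?_, ?_, ?_, ?_,
    ?_, ?_, ?_, ?_, ?_, ?_⟩
  · exact powNe h hN (by omega) (by omega) (by omega)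
  · exact powNe h hN (by omega) (by omega) (by omega)
  · exact powNe h hN (by omega) (by omega) (by omega)
  · exact powNe h hN (by omega) (by omega) (by omega)
  · exact powNe h hN (by omega) (by omega) (by omega)
  · exact powNe h hN (by omega) (by omega) (by omega)
  · -- a ~ b : sum = 3q, order 2
    refine adjPow h _ _ (powNe h hN (by omega) (by omega) (by omega)) ?_
    have hcop : Nat.gcd 2 3 = 1 := by norm_num
    have : orderOf (h ^ ((q + 1) + (2 * q - 1))) = 2 :=
      ord_pow_fac h hN' (show (q + 1) + (2 * q - 1) = q * 3 from by omega) hcop (by omega)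
    rw [this]; exact Nat.prime_two
  · -- b ~ c : sum = 3q - 1 = 2*(3l+1), order q
    refine adjPow h _ _ (powNe h hN (by omega) (by omega) (by omega)) ?_
    have hnd : ¬ q ∣ (3 * l + 1) := by
      rw [show 3 * l + 1 = q * 1 + l from by omega]
      exact not_dvd_of q 1 l (by omega) (by omega)
    have hcop : Nat.gcd q (3 * l + 1) = 1 := (hq.coprime_iff_not_dvd).2 hnd
    have : orderOf (h ^ ((2 * q - 1) + q)) = q :=
      ord_pow_fac h hN (show (2 * q - 1) + q = 2 * (3 * l + 1) from by omega) hcop (by norm_num)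
    rw [this]; exact hq
  · -- c ~ d : sum = q + 1 = 2*(l+1), order q
    refine adjPow h _ _ (powNe h hN (by omega) (by omega) (by omega)) ?_
    have hnd : ¬ q ∣ (l + 1) := by
      intro hd; have := Nat.le_of_dvd (by omega) hd; omega
    have hcop : Nat.gcd q (l + 1) = 1 := (hq.coprime_iff_not_dvd).2 hnd
    have : orderOf (h ^ (q + 1)) = q :=
      ord_pow_fac h hN (show q + 1 = 2 * (l + 1) from by omega) hcop (by norm_num)
    rw [this]; exact hq
  · -- a ≁ c : sum = 2q + 1, coprime
    refine nonadjPow h _ _ ?_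
    have h2 : ¬ (2 : ℕ) ∣ ((q + 1) + q) := by
      rw [show (q + 1) + q = 2 * q + 1 from by omega]
      exact not_dvd_of 2 q 1 (by norm_num) (by norm_num)
    have hqd : ¬ q ∣ ((q + 1) + q) := by
      rw [show (q + 1) + q = q * 2 + 1 from by omega]
      exact not_dvd_of q 2 1 (by norm_num) (by omega)
    have : orderOf (h ^ ((q + 1) + q)) = 2 * q :=
      ord_pow_cop h hN (coprime_of_not_dvd Nat.prime_two hq h2 hqd)
    rw [this]; exact not_prime_mul' (by norm_num) hq.two_le
  · -- b ≁ d : sum = 2q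
    refine nonadjPow h _ _ ?_
    rw [ord_pow_id h hN (by omega)]
    exact Nat.not_prime_one
  · -- a ≁ d : sum = q + 2, coprime
    refine nonadjPow h _ _ ?_
    have h2 : ¬ (2 : ℕ) ∣ ((q + 1) + 1) := by
      rw [show (q + 1) + 1 = 2 * (l + 1) + 1 from by omega]
      exact not_dvd_of 2 (l + 1) 1 (by norm_num) (by norm_num)
    have hqd : ¬ q ∣ ((q + 1) + 1) := by
      rw [show (q + 1) + 1 = q * 1 + 2 from by omega]
      exact not_dvd_of q 1 2 (by norm_num) (by omega)
    have : orderOf (h ^ ((q + 1) + 1)) = 2 * q :=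
      ord_pow_cop h hN (coprime_of_not_dvd Nat.prime_two hq h2 hqd)
    rw [this]; exact not_prime_mul' (by norm_num) hq.two_le

/-- Case: an element of order `pq` with `3 ≤ p < q` primes gives an induced P4. -/
lemma casePQ {G : Type*} [Group G] [Fintype G] (h : G) (p q : ℕ)
    (hp : p.Prime) (hq : q.Prime) (hp2 : p ≠ 2) (hlt : p < q)
    (hN : orderOf h = p * q) : ∃ a b c d : G, IsInducedP4 (pog G) a b c d := by
  have hp3 : 3 ≤ p := by have := hp.two_le; omega
  obtain ⟨k, hk⟩ := hp.odd_of_ne_two hp2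
  have hqne2 : q ≠ 2 := by omega
  obtain ⟨l, hl⟩ := hq.odd_of_ne_two hqne2
  have hq5 : 5 ≤ q := by omega
  have hppos : 0 < p := by omega
  have hs5 : p * 5 ≤ p * q := Nat.mul_le_mul_left p hq5
  have hcomm : p * q = q * p := mul_comm p q
  refine ⟨h ^ 1, h ^ (p - 1), h ^ (2 * p + 1), h ^ (p * q - 1), ?_, ?_, ?_, ?_, ?_, ?_,
    ?_, ?_, ?_, ?_, ?_, ?_⟩
  · exact powNe h hN (by omega) (by omega) (by omega)
  · exact powNe h hN (by omega) (by omega) (by omega)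
  · exact powNe h hN (by omega) (by omega) (by omega)
  · exact powNe h hN (by omega) (by omega) (by omega)
  · exact powNe h hN (by omega) (by omega) (by omega)
  · exact powNe h hN (by omega) (by omega) (by omega)
  · -- a ~ b : sum = p, order q
    refine adjPow h _ _ (powNe h hN (by omega) (by omega) (by omega)) ?_
    have hcop : Nat.gcd q 1 = 1 := Nat.gcd_one_right q
    have : orderOf (h ^ (1 + (p - 1))) = q :=
      ord_pow_fac h hN (show 1 + (p - 1) = p * 1 from by omega) hcop hppos
    rw [this]; exact hq
  · -- b ~ c : sum = 3p, order q
    refine adjPow h _ _ (powNe h hN (by omega) (by omega) (by omega)) ?_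
    have hnd : ¬ q ∣ 3 := by intro hd; have := Nat.le_of_dvd (by norm_num) hd; omega
    have hcop : Nat.gcd q 3 = 1 := (hq.coprime_iff_not_dvd).2 hnd
    have : orderOf (h ^ ((p - 1) + (2 * p + 1))) = q :=
      ord_pow_fac h hN (show (p - 1) + (2 * p + 1) = p * 3 from by omega) hcop hppos
    rw [this]; exact hq
  · -- c ~ d : sum = pq + 2p = p*(q+2), order q
    refine adjPow h _ _ (powNe h hN (by omega) (by omega) (by omega)) ?_
    have hnd : ¬ q ∣ (q + 2) := by
      rw [show q + 2 = q * 1 + 2 from by omega]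
      exact not_dvd_of q 1 2 (by norm_num) (by omega)
    have hcop : Nat.gcd q (q + 2) = 1 := (hq.coprime_iff_not_dvd).2 hnd
    have hkey : (2 * p + 1) + (p * q - 1) = p * (q + 2) := by
      have : p * (q + 2) = p * q + p * 2 := by ring
      omega
    have : orderOf (h ^ ((2 * p + 1) + (p * q - 1))) = q :=
      ord_pow_fac h hN hkey hcop hppos
    rw [this]; exact hq
  · -- a ≁ c : sum = 2p + 2, coprime
    refine nonadjPow h _ _ ?_
    have hpd : ¬ p ∣ (1 + (2 * p + 1)) := by
      rw [show 1 + (2 * p + 1) = p * 2 + 2 from by omega]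
      exact not_dvd_of p 2 2 (by norm_num) (by omega)
    have hqd : ¬ q ∣ (1 + (2 * p + 1)) :=
      not_dvd_of' (by omega) (by omega) (by omega)
    have : orderOf (h ^ (1 + (2 * p + 1))) = p * q :=
      ord_pow_cop h hN (coprime_of_not_dvd hp hq hpd hqd)
    rw [this]; exact not_prime_mul' hp.two_le hq.two_le
  · -- b ≁ d : sum = pq + p - 2, coprime
    refine nonadjPow h _ _ ?_
    have hpd : ¬ p ∣ ((p - 1) + (p * q - 1)) := by
      rw [show (p - 1) + (p * q - 1) = p * q + (p - 2) from by omega]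
      exact not_dvd_of p q (p - 2) (by omega) (by omega)
    have hqd : ¬ q ∣ ((p - 1) + (p * q - 1)) := by
      rw [show (p - 1) + (p * q - 1) = q * p + (p - 2) from by omega]
      exact not_dvd_of q p (p - 2) (by omega) (by omega)
    have : orderOf (h ^ ((p - 1) + (p * q - 1))) = p * q :=
      ord_pow_cop h hN (coprime_of_not_dvd hp hq hpd hqd)
    rw [this]; exact not_prime_mul' hp.two_le hq.two_le
  · -- a ≁ d : sum = pq
    refine nonadjPow h _ _ ?_
    rw [ord_pow_id h hN (by omega)]
    exact Nat.not_prime_one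

theorem stmt_14 (G : Type*) [Group G] [Fintype G]
    (hcard : ∃ m : ℕ, Odd m ∧ (Nat.card G = m ∨ Nat.card G = 2 * m))
    (hcog : ¬∃ a b c d : G, IsInducedP4 (pog G) a b c d) :
    ∀ g : G, g ≠ 1 → (orderOf g).Prime := by
  intro g hg
  by_contra hnp
  apply hcog
  have hn1 : orderOf g ≠ 1 := fun h => hg (orderOf_eq_one_iff.mp h)
  have hpos : 0 < orderOf g := orderOf_pos g
  obtain ⟨m, hm⟩ := Nat.minFac_dvd (orderOf g)
  have hpp : (orderOf g).minFac.Prime := Nat.minFac_prime hn1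
  set p := (orderOf g).minFac with hpdef
  have hm1 : m ≠ 1 := by
    rintro rfl; rw [mul_one] at hm; exact hnp (hm ▸ hpp)
  have hqq : m.minFac.Prime := Nat.minFac_prime hm1
  set q := m.minFac with hqdef
  obtain ⟨t, ht⟩ := Nat.minFac_dvd m
  have ht0 : 0 < t := by
    rcases Nat.eq_zero_or_pos t with rfl | h
    · have : orderOf g = 0 := by rw [hm, ht]; simp
      omega
    · exact h
  have hh : orderOf (g ^ t) = p * q := by
    have hdvd_t : t ∣ orderOf g := ⟨p * q, by rw [hm, ht]; ring⟩
    rw [orderOf_pow, Nat.gcd_eq_right hdvd_t, hm, ht,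
      show p * (q * t) = (p * q) * t from by ring, Nat.mul_div_cancel _ ht0]
  have hle : p ≤ q := by
    have hqd : q ∣ orderOf g := dvd_trans (Nat.minFac_dvd m) (Dvd.intro_left p hm.symm)
    exact Nat.minFac_le_of_dvd hqq.two_le hqd
  have hcardvd : p * q ∣ Nat.card G := by
    have h1 : p * q ∣ orderOf g := ⟨t, by rw [hm, ht]; ring⟩
    exact h1.trans (orderOf_dvd_natCard g)
  have h4 : ¬ ((4 : ℕ) ∣ Nat.card G) := by
    obtain ⟨M, hModd, hMc⟩ := hcard
    obtain ⟨u, hu⟩ := hModd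
    rintro ⟨c, hc⟩
    rcases hMc with e | e <;> omega
  by_cases hpq : p = q
  · have hp2 : p ≠ 2 := by
      rintro h2
      have he : p * q = 4 := by rw [← hpq, h2]
      exact h4 (he ▸ hcardvd)
    exact caseP2 (g ^ t) p hpp hp2 (by rw [hh, ← hpq])
  · have hlt : p < q := lt_of_le_of_ne hle hpq
    by_cases hp2 : p = 2
    · have hq2 : q ≠ 2 := by omega
      exact case2Q (g ^ t) q hqq hq2 (by rw [hh, hp2])
    · exact casePQ (g ^ t) p q hpp hqq hp2 hlt hh
end

section
/- If a finite group G has an element of order p for some prime p ≥ 5, then the prime-order element graph Γ(G) contains an induced 4-cycle; in particular, for x, y of order p in a cyclic subgroup of order p with y ∉ {x, x⁻¹}, the vertices x, y, x⁻¹, y⁻¹ form an induced 4-cycle, so Γ(G) is not chordal. -/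
/-- An induced 4-cycle `a ~ b ~ c ~ d ~ a` with non-adjacent diagonals. -/
def IsInducedC4 {V : Type*} (Γ : SimpleGraph V) (a b c d : V) : Prop :=
  a ≠ b ∧ a ≠ c ∧ a ≠ d ∧ b ≠ c ∧ b ≠ d ∧ c ≠ d ∧
    Γ.Adj a b ∧ Γ.Adj b c ∧ Γ.Adj c d ∧ Γ.Adj d a ∧ ¬Γ.Adj a c ∧ ¬Γ.Adj b d

lemma inv_swap' {G : Type*} [Group G] {a b : G} (h : a = b⁻¹) : b = a⁻¹ := by
  rw [h, inv_inv]

lemma aux_ord {G : Type*} [Group G] {p : ℕ} (hp : p.Prime) {x z : G}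
    (hx : orderOf x = p) (hz : z ∈ Subgroup.zpowers x) (hz1 : z ≠ 1) : orderOf z = p := by
  have h := orderOf_dvd_of_mem_zpowers hz
  rw [hx] at h
  rcases hp.eq_one_or_self_of_dvd _ h with h1 | h1
  · exact absurd (orderOf_eq_one_iff.mp h1) hz1
  · exact h1

theorem stmt_15 (G : Type*) [Group G] [Fintype G] (p : ℕ) (hp : p.Prime) (hp5 : 5 ≤ p)
    (hex : ∃ g : G, orderOf g = p) :
    (∃ a b c d : G, IsInducedC4 (pog G) a b c d) ∧
      ∀ x y : G, orderOf x = p → orderOf y = p → y ∈ Subgroup.zpowers x →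
        y ≠ x → y ≠ x⁻¹ → IsInducedC4 (pog G) x y x⁻¹ y⁻¹ := by
  have main : ∀ x y : G, orderOf x = p → orderOf y = p → y ∈ Subgroup.zpowers x →
      y ≠ x → y ≠ x⁻¹ → IsInducedC4 (pog G) x y x⁻¹ y⁻¹ := by
    intro x y hx hy hmem hyx hyxi
    have hxmem : x ∈ Subgroup.zpowers x := Subgroup.mem_zpowers x
    have hximem : x⁻¹ ∈ Subgroup.zpowers x := inv_mem hxmem
    have hyimem : y⁻¹ ∈ Subgroup.zpowers x := inv_mem hmem
    have hxx : x ≠ x⁻¹ := by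
      intro h
      have h2 : x ^ 2 = 1 := by rw [pow_two]; nth_rw 2 [h]; simp
      have hd := orderOf_dvd_of_pow_eq_one h2
      rw [hx] at hd
      have := Nat.le_of_dvd (by norm_num) hd
      omega
    have hyy : y ≠ y⁻¹ := by
      intro h
      have h2 : y ^ 2 = 1 := by rw [pow_two]; nth_rw 2 [h]; simp
      have hd := orderOf_dvd_of_pow_eq_one h2
      rw [hy] at hd
      have := Nat.le_of_dvd (by norm_num) hd
      omega
    have hxy1 : x * y ≠ 1 := fun h => hyxi (eq_inv_of_mul_eq_one_right h)
    have hyxi1 : y * x⁻¹ ≠ 1 := fun h => hyx (by rwa [mul_inv_eq_one] at h)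
    have hii1 : x⁻¹ * y⁻¹ ≠ 1 := fun h => hyxi (by
      rw [inv_mul_eq_one] at h
      exact inv_swap' h)
    have hyix1 : y⁻¹ * x ≠ 1 := fun h => hyx (by
      rw [inv_mul_eq_one] at h
      exact h)
    refine ⟨hyx.symm, hxx, ?_, hyxi, hyy, ?_, ?_, ?_, ?_, ?_, ?_, ?_⟩
    · intro h; exact hyxi (inv_swap' h)
    · intro h; exact hyx (inv_injective h).symm
    · exact ⟨hyx.symm, by rw [aux_ord hp hx (mul_mem hxmem hmem) hxy1]; exact hp⟩
    · exact ⟨fun h => hyxi h, by rw [aux_ord hp hx (mul_mem hmem hximem) hyxi1]; exact hp⟩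
    · exact ⟨fun h => hyx (inv_injective h).symm, by
        rw [aux_ord hp hx (mul_mem hximem hyimem) hii1]; exact hp⟩
    · exact ⟨fun h => hyxi (inv_swap' h.symm), by
        rw [aux_ord hp hx (mul_mem hyimem hxmem) hyix1]; exact hp⟩
    · rintro ⟨-, hpr⟩
      simp only [mul_inv_cancel, orderOf_one] at hpr
      exact Nat.not_prime_one hpr
    · rintro ⟨-, hpr⟩
      simp only [mul_inv_cancel, orderOf_one] at hpr
      exact Nat.not_prime_one hpr
  refine ⟨?_, main⟩
  obtain ⟨g, hg⟩ := hex
  have hgmem : g ^ 2 ∈ Subgroup.zpowers g := pow_mem (Subgroup.mem_zpowers g) 2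
  have hg21 : g ^ 2 ≠ 1 := by
    intro h
    have hd := orderOf_dvd_of_pow_eq_one h
    rw [hg] at hd
    have := Nat.le_of_dvd (by norm_num) hd
    omega
  have hord2 : orderOf (g ^ 2) = p := aux_ord hp hg hgmem hg21
  have h2g : g ^ 2 ≠ g := by
    intro h
    have : g * g = g * 1 := by rw [mul_one, ← pow_two, h]
    exact hg21 (by rw [mul_left_cancel this] at h ⊢; simp)
  have h2gi : g ^ 2 ≠ g⁻¹ := by
    intro h
    have h3 : g ^ 3 = 1 := by
      have : g ^ 3 = g ^ 2 * g := by rw [pow_succ]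
      rw [this, h, inv_mul_cancel]
    have hd := orderOf_dvd_of_pow_eq_one h3
    rw [hg] at hd
    have := Nat.le_of_dvd (by norm_num) hd
    omega
  exact ⟨g, g ^ 2, g⁻¹, (g ^ 2)⁻¹, main g (g ^ 2) hg hord2 hgmem h2g h2gi⟩
end

section
/- Let G be a finite 2-group with a unique element of order 2 (i.e., G is cyclic or generalized quaternion). Then the prime-order element graph Γ(G) is a disjoint union of edges and isolated vertices: every vertex has degree at most 1. -/
theorem stmt_16 (G : Type*) [Group G] [Fintype G] (hG : IsPGroup 2 G)
    (hu : ∃! g : G, orderOf g = 2) :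
    ∀ x : G, ((pog G).neighborSet x).ncard ≤ 1 := by
  obtain ⟨g, hg, hgu⟩ := hu
  intro x
  have hsub : (pog G).neighborSet x ⊆ {x⁻¹ * g} := by
    intro y ⟨hne, hp⟩
    obtain ⟨k, hk⟩ := hG (x * y)
    have h2 : orderOf (x * y) = 2 := by
      have hd : orderOf (x * y) ∣ 2 ^ k := orderOf_dvd_of_pow_eq_one hk
      have := (Nat.Prime.dvd_of_dvd_pow (p := orderOf (x*y)) hp hd)
      exact (Nat.prime_dvd_prime_iff_eq hp Nat.prime_two).mp this
    have : x * y = g := hgu _ h2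
    simp [Set.mem_singleton_iff, ← this]
  calc ((pog G).neighborSet x).ncard ≤ ({x⁻¹ * g} : Set G).ncard :=
        Set.ncard_le_ncard hsub (Set.finite_singleton _)
    _ = 1 := Set.ncard_singleton _
end

section
/- If a finite group G contains an element a of order p·q for distinct primes p < q, then the vertices e, a^p, a^{-p}, a^q form a claw in Γ(G): e is adjacent to each of a^p, a^{-p}, a^q, and these three are pairwise non-adjacent; hence Γ(G) is not claw-free. -/
/-- A claw (induced `K_{1,3}`): a center `c` adjacent to three pairwise
non-adjacent vertices `x, y, z`. -/
def IsClaw {V : Type*} (Γ : SimpleGraph V) (c x y z : V) : Prop :=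
  c ≠ x ∧ c ≠ y ∧ c ≠ z ∧ x ≠ y ∧ x ≠ z ∧ y ≠ z ∧
    Γ.Adj c x ∧ Γ.Adj c y ∧ Γ.Adj c z ∧ ¬Γ.Adj x y ∧ ¬Γ.Adj x z ∧ ¬Γ.Adj y z

theorem stmt_18 (G : Type*) [Group G] [Fintype G] (p q : ℕ) (hp : p.Prime) (hq : q.Prime)
    (hlt : p < q) (a : G) (ha : orderOf a = p * q) :
    IsClaw (pog G) 1 (a ^ p) (a ^ p)⁻¹ (a ^ q) := by
  have hp2 := hp.two_le
  have hq3 : 3 ≤ q := by omega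
  have hppos : 0 < p := by omega
  -- orders of the three vertices
  have hop : orderOf (a ^ p) = q := by
    rw [orderOf_pow, ha, Nat.gcd_comm, Nat.gcd_eq_left (dvd_mul_right p q),
      Nat.mul_div_cancel_left _ hppos]
  have hoq : orderOf (a ^ q) = p := by
    rw [orderOf_pow, ha, Nat.gcd_comm, Nat.gcd_eq_left (dvd_mul_left q p),
      Nat.mul_div_cancel _ (by omega)]
  -- coprimality facts
  have hcop1 : Nat.Coprime (p * q) (p + q) := by
    apply Nat.Coprime.mul
    · rw [hp.coprime_iff_not_dvd]
      intro h
      have : p ∣ q := (Nat.dvd_add_right (dvd_refl p)).mp h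
      have := (Nat.prime_dvd_prime_iff_eq hp hq).mp this
      omega
    · rw [hq.coprime_iff_not_dvd]
      intro h
      have := Nat.le_of_dvd (by omega) h
      have h2 : q ∣ p := by simpa using Nat.dvd_sub h (dvd_refl q)
      have := Nat.le_of_dvd hppos h2
      omega
  have hcop2 : Nat.Coprime (p * q) (q - p) := by
    apply Nat.Coprime.mul
    · rw [hp.coprime_iff_not_dvd]
      intro h
      have : p ∣ q := by
        have : p ∣ (q - p) + p := Nat.dvd_add h (dvd_refl p)
        rwa [Nat.sub_add_cancel (le_of_lt hlt)] at this
      have := (Nat.prime_dvd_prime_iff_eq hp hq).mp this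
      omega
    · rw [hq.coprime_iff_not_dvd]
      intro h
      have := Nat.le_of_dvd (by omega) h
      omega
  have hnp : ¬ (p * q).Prime := Nat.not_prime_mul (by omega) (by omega)
  -- order of a^(p+q) and a^(q-p)
  have hsum : orderOf (a ^ (p + q)) = p * q := by
    rw [orderOf_pow, ha, Nat.Coprime.gcd_eq_one hcop1, Nat.div_one]
  have hdiff : orderOf (a ^ (q - p)) = p * q := by
    rw [orderOf_pow, ha, Nat.Coprime.gcd_eq_one hcop2, Nat.div_one]
  -- distinctness
  have h1p : (1 : G) ≠ a ^ p := by
    intro h; rw [← h, orderOf_one] at hop; omega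
  have h1pi : (1 : G) ≠ (a ^ p)⁻¹ := by
    intro h
    exact h1p (by simpa using congrArg (·⁻¹) h)
  have h1q : (1 : G) ≠ a ^ q := by
    intro h; rw [← h, orderOf_one] at hoq; omega
  have hppi : a ^ p ≠ (a ^ p)⁻¹ := by
    intro h
    have h2 : (a ^ p) ^ 2 = 1 := by
      rw [pow_two]; nth_rewrite 2 [h]; exact mul_inv_cancel _
    have := orderOf_dvd_of_pow_eq_one h2
    rw [hop] at this
    have := Nat.le_of_dvd (by omega) this
    omega
  have hpq : a ^ p ≠ a ^ q := by
    intro h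
    rw [h, hoq] at hop; omega
  have hpiq : (a ^ p)⁻¹ ≠ a ^ q := by
    intro h
    have : orderOf (a ^ p)⁻¹ = p := by rw [h, hoq]
    rw [orderOf_inv, hop] at this; omega
  refine ⟨h1p, h1pi, h1q, hppi, hpq, hpiq, ?_, ?_, ?_, ?_, ?_, ?_⟩
  · exact ⟨h1p, by rw [one_mul, hop]; exact hq⟩
  · exact ⟨h1pi, by rw [one_mul, orderOf_inv, hop]; exact hq⟩
  · exact ⟨h1q, by rw [one_mul, hoq]; exact hp⟩
  · rintro ⟨-, hpr⟩
    rw [mul_inv_cancel, orderOf_one] at hpr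
    exact hpr.one_lt.ne' rfl
  · rintro ⟨-, hpr⟩
    rw [← pow_add, hsum] at hpr
    exact hnp hpr
  · rintro ⟨-, hpr⟩
    have hc : a ^ q * (a ^ p)⁻¹ = (a ^ p)⁻¹ * a ^ q :=
      ((Commute.refl a).pow_pow q p).inv_right.eq
    have : (a ^ p)⁻¹ * a ^ q = a ^ (q - p) := by
      rw [← hc, ← pow_sub a (le_of_lt hlt)]
    rw [this, hdiff] at hpr
    exact hnp hpr
end

section
/- If a finite group G contains an element a of order p² for a prime p ≥ 5, then the vertices a, a^{p−1}, a^{2p−1}, a^{3p−1} form a claw in Γ(G) with center a; hence Γ(G) is not claw-free. -/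
theorem stmt_19 (G : Type*) [Group G] [Fintype G] (p : ℕ) (hp : p.Prime) (hp5 : 5 ≤ p)
    (a : G) (ha : orderOf a = p ^ 2) :
    IsClaw (pog G) a (a ^ (p - 1)) (a ^ (2 * p - 1)) (a ^ (3 * p - 1)) := by
  have hq : p ^ 2 = p * p := sq p
  have hpp : p * p ≥ 5 * p := Nat.mul_le_mul_right p hp5
  have hinj : ∀ m n : ℕ, m < p ^ 2 → n < p ^ 2 → a ^ m = a ^ n → m = n := by
    intro m n hm hn h
    have := pow_eq_pow_iff_modEq.mp h
    rwa [ha, Nat.ModEq, Nat.mod_eq_of_lt hm, Nat.mod_eq_of_lt hn] at this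
  have hne : ∀ m n : ℕ, m < p ^ 2 → n < p ^ 2 → m ≠ n → a ^ m ≠ a ^ n := by
    intro m n hm hn hmn h; exact hmn (hinj m n hm hn h)
  have key : ∀ k : ℕ, 0 < k → k < p → orderOf (a ^ (k * p)) = p := by
    intro k hk0 hkp
    rw [orderOf_pow, ha]
    have hg : Nat.gcd (p ^ 2) (k * p) = p := by
      rw [pow_two, Nat.gcd_mul_right]
      have hnd : ¬ p ∣ k := fun h => absurd (Nat.le_of_dvd hk0 h) (not_le.mpr hkp)
      rw [(hp.coprime_iff_not_dvd.mpr hnd), one_mul]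
    rw [hg, pow_two, Nat.mul_div_cancel _ hp.pos]
  have adj : ∀ k : ℕ, 0 < k → k < p → (pog G).Adj a (a ^ (k * p - 1)) := by
    intro k hk0 hkp
    have hkP : k * p < p * p := (Nat.mul_lt_mul_right hp.pos).mpr hkp
    have hk1 : 5 ≤ k * p := le_trans hp5 (Nat.le_mul_of_pos_left p hk0)
    constructor
    · nth_rewrite 1 [← pow_one a]
      exact hne 1 (k * p - 1) (by omega) (by omega) (by omega)
    · have hprod : a * a ^ (k * p - 1) = a ^ (k * p) := by
        nth_rewrite 1 [← pow_one a]
        rw [← pow_add]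
        congr 1
        omega
      rw [hprod, key k hk0 hkp]
      exact hp
  have nonadj : ∀ c : ℕ, 3 ≤ c → c ≤ 6 → ¬ Nat.Prime (orderOf (a ^ (c * p - 2))) := by
    intro c hc3 hc6
    have hc1 : 2 ≤ c * p := le_trans (by omega) (Nat.mul_le_mul hc3 hp5)
    have hnd : ¬ p ∣ (c * p - 2) := by
      intro hd
      have h2 : p ∣ (c * p - (c * p - 2)) := Nat.dvd_sub (Dvd.intro c (mul_comm p c)) hd
      have he : c * p - (c * p - 2) = 2 := by omega
      rw [he] at h2
      have := Nat.le_of_dvd (by norm_num) h2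
      omega
    have hcop : Nat.Coprime (p ^ 2) (c * p - 2) :=
      Nat.Coprime.pow_left 2 (hp.coprime_iff_not_dvd.mpr hnd)
    rw [orderOf_pow, ha, hcop, Nat.div_one, pow_two, Nat.prime_mul_iff]
    rintro (⟨_, h1⟩ | ⟨_, h1⟩) <;> omega
  have nonadj' : ∀ j k : ℕ, 1 ≤ j → 1 ≤ k → 3 ≤ j + k → j + k ≤ 6 →
      ¬ (pog G).Adj (a ^ (j * p - 1)) (a ^ (k * p - 1)):= by
    intro j k hj hk hjk3 hjk ⟨_, hpr⟩
    have hprod : a ^ (j * p - 1) * a ^ (k * p - 1) = a ^ ((j + k) * p - 2) := by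
      rw [← pow_add]
      congr 1
      have h1 : 1 ≤ j * p := Nat.mul_pos hj hp.pos
      have h2 : 1 ≤ k * p := Nat.mul_pos hk hp.pos
      have h3 : (j + k) * p = j * p + k * p := by ring
      omega
    rw [hprod] at hpr
    exact nonadj (j + k) hjk3 hjk hpr
  have h2p : 2 * p < p * p := by nlinarith
  have h3p : 3 * p < p * p := by nlinarith
  refine ⟨?_, ?_, ?_, ?_, ?_, ?_, ?_, ?_, ?_, ?_, ?_, ?_⟩
  · nth_rewrite 1 [← pow_one a]
    exact hne 1 (p - 1) (by omega) (by omega) (by omega)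
  · nth_rewrite 1 [← pow_one a]
    exact hne 1 (2 * p - 1) (by omega) (by omega) (by omega)
  · nth_rewrite 1 [← pow_one a]
    exact hne 1 (3 * p - 1) (by omega) (by omega) (by omega)
  · exact hne _ _ (by omega) (by omega) (by omega)
  · exact hne _ _ (by omega) (by omega) (by omega)
  · exact hne _ _ (by omega) (by omega) (by omega)
  · have := adj 1 (by omega) (by omega); rwa [one_mul] at this
  · exact adj 2 (by omega) (by omega)
  · exact adj 3 (by omega) (by omega)
  · have := nonadj' 1 2 (by omega) (by omega) (by omega) (by omega); rwa [one_mul] at this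
  · have := nonadj' 1 3 (by omega) (by omega) (by omega) (by omega); rwa [one_mul] at this
  · exact nonadj' 2 3 (by omega) (by omega) (by omega) (by omega)
end
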